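/- Fix n ≥ 1. In the polynomial ring O_amb = ℤ[a_{ij}, z_j], there is the ideal colon equality (z_1, f_1, ..., f_n) : (z_1, f_1, ..., f_n, Δ_1) = (z_1, ..., z_{n+1}). (The residual of the residual ideal recovers I_D.) -/

import Mathlib

open MvPolynomial

/-- The ambient polynomial ring `O_amb = ℤ[a_{ij}, z_j]`, `1 ≤ i ≤ n`, `1 ≤ j ≤ n+1`. -/
noncomputable abbrev Oamb (n : ℕ) : Type := MvPolynomial ((Fin n × Fin (n+1)) ⊕ Fin (n+1)) ℤ

/-- The generic matrix entry `a_{ij}` as an element of `O_amb`. -/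
noncomputable def av {n : ℕ} (i : Fin n) (j : Fin (n+1)) : Oamb n := X (Sum.inl (i, j))

/-- The variable `z_j` as an element of `O_amb`. -/
noncomputable def zv {n : ℕ} (j : Fin (n+1)) : Oamb n := X (Sum.inr j)

/-- The generic linear form `f_i = Σ_j a_{ij} z_j`. -/
noncomputable def fv {n : ℕ} (i : Fin n) : Oamb n := ∑ j, av i j * zv j

/-- `Δ₁`: the determinant of the `n × n` submatrix of `(a_{ij})` obtained by deleting the
first column. -/
noncomputable def Δ₁ (n : ℕ) : Oamb n := Matrix.det (Matrix.of fun i j : Fin n => av i j.succ)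

/-! Write `I = (z₀, f₁, …, fₙ)` and `Z = (z₀, …, zₙ)`. Solving `f_i - a_{i0} z₀ = Σ_k a_{i,k+1} z_{k+1}`
by Cramer's rule gives `Δ₁ z_j ∈ I`, so `Z ⊆ I : (I + (Δ₁))`. Conversely `I ⊆ Z`, `Z` is prime (the
kernel of `z ↦ 0` onto the domain `ℤ[a]`) and `Δ₁ ∉ Z`, so `w Δ₁ ∈ I` forces `w ∈ Z`. -/

namespace MvPolynomial

variable {R σ τ : Type*} [CommRing R]

theorem ker_aeval_sumElim_X_zero :
    RingHom.ker (aeval (Sum.elim X 0) : MvPolynomial (σ ⊕ τ) R →ₐ[R] MvPolynomial σ R) =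
      Ideal.span (Set.range fun j : τ => (X (Sum.inr j) : MvPolynomial (σ ⊕ τ) R)) := by
  set J := Ideal.span (Set.range fun j : τ => (X (Sum.inr j) : MvPolynomial (σ ⊕ τ) R))
  apply le_antisymm
  · -- modulo `J`, substituting `0` for the `τ`-variables changes nothing
    have hmk : ((Ideal.Quotient.mkₐ R J).comp (rename Sum.inl)).comp
        (aeval (Sum.elim X 0)) = Ideal.Quotient.mkₐ R J := by
      ext (i | j)
      · simp
      · have hj : (X (Sum.inr j) : MvPolynomial (σ ⊕ τ) R) ∈ J := Ideal.subset_span ⟨j, rfl⟩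
        simpa using (Ideal.Quotient.eq_zero_iff_mem.mpr hj).symm
    intro p hp
    have hp : aeval (Sum.elim X 0) p = (0 : MvPolynomial σ R) := hp
    rw [← Ideal.Quotient.eq_zero_iff_mem, ← Ideal.Quotient.mkₐ_eq_mk R, ← hmk,
      AlgHom.comp_apply, hp, map_zero]
  · rw [Ideal.span_le]
    rintro _ ⟨j, rfl⟩
    simp

theorem isPrime_span_range_X_inr [IsDomain R] :
    (Ideal.span (Set.range fun j : τ => (X (Sum.inr j) : MvPolynomial (σ ⊕ τ) R))).IsPrime := by
  rw [← ker_aeval_sumElim_X_zero]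
  exact RingHom.ker_isPrime _

end MvPolynomial

namespace Matrix

theorem det_mul_mem_of_mulVec_mem {R ι : Type*} [CommRing R] [Fintype ι] [DecidableEq ι]
    {A : Matrix ι ι R} {v : ι → R} {I : Ideal R} (h : ∀ i, (A *ᵥ v) i ∈ I) (k : ι) :
    A.det * v k ∈ I := by
  have hcramer : A.det * v k = (A.adjugate *ᵥ (A *ᵥ v)) k := by
    rw [mulVec_mulVec, adjugate_mul, smul_mulVec, one_mulVec, Pi.smul_apply, smul_eq_mul]
  rw [hcramer]
  exact Ideal.sum_mem _ fun i _ => Ideal.mul_mem_left _ _ (h i)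

end Matrix

theorem Ideal.colon_span_insert_eq_of_isPrime {R : Type*} [CommRing R] {S T : Set R} {d : R}
    (hT : (span T).IsPrime) (hST : S ⊆ span T) (hd : d ∉ span T)
    (hTd : ∀ t ∈ T, t * d ∈ span S) :
    (span S).colon (span (insert d S)) = span T := by
  have hcolon : ∀ r, r ∈ (span S).colon (span (insert d S)) ↔ r * d ∈ span S := fun r => by
    simp only [Ideal.colon_span, Submodule.mem_colon, Set.forall_mem_insert, smul_eq_mul]
    exact and_iff_left fun s hs => mul_mem_left _ r (subset_span hs)
  ext r
  rw [hcolon]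
  constructor
  · intro hr
    exact (hT.mem_or_mem (span_le.mpr hST hr)).resolve_right hd
  · intro hr
    have hspan : span T ≤ (span S).colon {d} :=
      span_le.mpr fun t ht => Submodule.mem_colon_singleton.mpr (hTd t ht)
    exact Submodule.mem_colon_singleton.mp (hspan hr)

section

variable {n : ℕ}

theorem fv_mem_span_zv (i : Fin n) : fv i ∈ Ideal.span (Set.range fun j : Fin (n+1) => zv j) :=
  Ideal.sum_mem _ fun j _ => Ideal.mul_mem_left _ _ (Ideal.subset_span ⟨j, rfl⟩)

theorem Δ₁_notMem_span_zv : Δ₁ n ∉ Ideal.span (Set.range fun j : Fin (n+1) => zv j) := by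
  -- specialize `(a_{ij})` to `(0 | 1)` and `z` to `0`
  let ψ : Oamb n →ₐ[ℤ] ℤ :=
    aeval (Sum.elim (fun p : Fin n × Fin (n+1) => if p.2 = p.1.succ then 1 else 0) 0)
  have hZ : Ideal.span (Set.range fun j : Fin (n+1) => zv j) ≤ RingHom.ker ψ := by
    rw [Ideal.span_le]
    rintro _ ⟨j, rfl⟩
    simp [ψ, zv]
  have hΔ : ψ (Δ₁ n) = 1 := by
    rw [Δ₁, AlgHom.map_det, ← Matrix.det_one (n := Fin n) (R := ℤ)]
    congr 1
    ext i j
    simp [ψ, av, Matrix.one_apply, eq_comm]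
  exact fun h => one_ne_zero (hΔ ▸ RingHom.mem_ker.mp (hZ h))

theorem zv_mul_Δ₁_mem_span (j : Fin (n+1)) :
    zv j * Δ₁ n ∈ Ideal.span (insert (zv 0) (Set.range fun i : Fin n => fv i)) := by
  set I := Ideal.span (insert (zv 0) (Set.range fun i : Fin n => fv i))
  have hz₀ : zv 0 ∈ I := Ideal.subset_span (Set.mem_insert _ _)
  induction j using Fin.cases with
  | zero => exact I.mul_mem_right _ hz₀
  | succ k =>
    rw [mul_comm, Δ₁]
    refine Matrix.det_mul_mem_of_mulVec_mem (A := Matrix.of fun i j : Fin n => av i j.succ)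
      (v := fun k => zv k.succ) (fun i => ?_) k
    have hmulVec : (Matrix.of (fun i j : Fin n => av i j.succ)).mulVec (fun k => zv k.succ) i =
        fv i - av i 0 * zv 0 := by
      rw [fv, Fin.sum_univ_succ, add_sub_cancel_left]
      rfl
    rw [hmulVec]
    exact I.sub_mem (Ideal.subset_span (Set.mem_insert_of_mem _ ⟨i, rfl⟩))
      (I.mul_mem_left _ hz₀)

end

theorem colon_residual_eq_ID_general (n : ℕ) :
    Submodule.colon
        (Ideal.span (insert (zv 0) (Set.range (fun i : Fin n => fv i))))
        (Ideal.span (insert (zv 0) (insert (Δ₁ n) (Set.range (fun i : Fin n => fv i)))))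
      = Ideal.span (Set.range (fun j : Fin (n+1) => zv j)) := by
  rw [Set.insert_comm]
  refine Ideal.colon_span_insert_eq_of_isPrime MvPolynomial.isPrime_span_range_X_inr ?_
    Δ₁_notMem_span_zv ?_
  · rintro _ (rfl | ⟨i, rfl⟩)
    exacts [Ideal.subset_span ⟨0, rfl⟩, fv_mem_span_zv i]
  · rintro _ ⟨j, rfl⟩
    exact zv_mul_Δ₁_mem_span j

/-- The colon ideal equality `(z_1, f_1, …, f_n) : (z_1, f_1, …, f_n, Δ₁) = (z_1, …, z_{n+1})`
in `O_amb`: the residual of the residual ideal recovers `I_D`. -/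
theorem colon_residual_eq_ID (n : ℕ) (hn : 1 ≤ n) :
    Submodule.colon
        (Ideal.span (insert (zv 0) (Set.range (fun i : Fin n => fv i))))
        (Ideal.span (insert (zv 0) (insert (Δ₁ n) (Set.range (fun i : Fin n => fv i)))))
      = Ideal.span (Set.range (fun j : Fin (n+1) => zv j)) :=
  colon_residual_eq_ID_general n
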